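/- Let t ≥ 4 be an integer and G a connected graph of order n ≥ 2. If t ≡ 1 (mod 4), then dim_l(G ⊙ P_t) = n·⌊t/4⌋, and if t ≢ 1 (mod 4), then dim_l(G ⊙ P_t) = n·⌈t/4⌉. -/

import Mathlib

open SimpleGraph

/-- A set `S` is a local metric generator for `G` if every pair of adjacent
vertices is distinguished (by distance) by some element of `S`. -/
def IsLocalMetricGenerator {α : Type*} (G : SimpleGraph α) (S : Set α) : Prop :=
  ∀ x y : α, G.Adj x y → ∃ v ∈ S, G.dist v x ≠ G.dist v y

/-- The local metric dimension of a graph. -/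
noncomputable def localMetricDim {α : Type*} (G : SimpleGraph α) : ℕ :=
  sInf {k | ∃ S : Finset α, S.card = k ∧ IsLocalMetricGenerator G ↑S}

/-- A local metric basis: a minimum-cardinality local metric generator. -/
def IsLocalMetricBasis {α : Type*} (G : SimpleGraph α) (S : Finset α) : Prop :=
  IsLocalMetricGenerator G ↑S ∧ S.card = localMetricDim G

/-- The corona product `G ⊙ H`. -/
def corona {α β : Type*} (G : SimpleGraph α) (H : SimpleGraph β) :
    SimpleGraph (α ⊕ α × β) :=
  SimpleGraph.fromRel (fun x y => match x, y with
    | Sum.inl a, Sum.inl a' => G.Adj a a'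
    | Sum.inl a, Sum.inr p => a = p.1
    | Sum.inr p, Sum.inl a => a = p.1
    | Sum.inr p, Sum.inr q => p.1 = q.1 ∧ H.Adj p.2 q.2)

/-- The join `K₁ + H`; the vertex of `K₁` is `none`. -/
def joinK1 {β : Type*} (H : SimpleGraph β) : SimpleGraph (Option β) :=
  SimpleGraph.fromRel (fun x y => match x, y with
    | none, some _ => True
    | some b, some b' => H.Adj b b'
    | _, _ => False)

/-- Eccentricity of a vertex (in `ℕ∞`). -/
noncomputable def ecc {α : Type*} (G : SimpleGraph α) (x : α) : ℕ∞ :=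
  ⨆ y, G.edist x y

/-- Radius of a graph (in `ℕ∞`). -/
noncomputable def gradius {α : Type*} (G : SimpleGraph α) : ℕ∞ :=
  ⨅ x, ecc G x

/-- Diameter of a graph (in `ℕ∞`). -/
noncomputable def gdiam {α : Type*} (G : SimpleGraph α) : ℕ∞ :=
  ⨆ x, ecc G x

/-!
Every walk into a copy of `H` in `G ⊙ H` from outside it passes through the root of that copy,
so vertices outside a copy are at equal distance from both ends of an edge inside it; within a
copy distances are `0`, `1` or `2`, so such an edge `pq` is resolved exactly by the vertices of
its own copy lying in `N(p) ∆ N(q)`. Edges at the roots are resolved once every copy contains a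
vertex of the generator and `G` has a second vertex. Hence `dim_l(G ⊙ H) = n · m`, where `m` is
the least size of a set of vertices of `H` meeting `N(p) ∆ N(q)` for every edge `pq`.
For `H = P_t` the edge `{e, e+1}` is resolved exactly by the window `e-1, …, e+2`, so
`m = ⌈(t-1)/4⌉ = ⌊(t+2)/4⌋`, attained by the vertices `2, 6, 10, …` (capped at `t-1`).
-/

open Sum
open scoped Finset

section LocalMetricDim

variable {V : Type*} {G : SimpleGraph V}

lemma localMetricDim_le_card {S : Finset V} (hS : IsLocalMetricGenerator G ↑S) :
    localMetricDim G ≤ #S :=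
  Nat.sInf_le ⟨S, rfl, hS⟩

lemma isLocalMetricGenerator_univ [Fintype V] :
    IsLocalMetricGenerator G ↑(Finset.univ : Finset V) :=
  fun x y hxy => ⟨x, Finset.mem_coe.2 (Finset.mem_univ x), by
    rw [dist_self, dist_eq_one_iff_adj.2 hxy]
    exact zero_ne_one⟩

lemma le_localMetricDim [Finite V] {m : ℕ}
    (h : ∀ S : Finset V, IsLocalMetricGenerator G ↑S → m ≤ #S) : m ≤ localMetricDim G := by
  have := Fintype.ofFinite V
  obtain ⟨S, hcard, hS⟩ : localMetricDim G ∈ {k | ∃ S : Finset V, #S = k ∧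
      IsLocalMetricGenerator G ↑S} :=
    Nat.sInf_mem ⟨_, Finset.univ, rfl, isLocalMetricGenerator_univ⟩
  exact hcard ▸ h S hS

end LocalMetricDim

section Corona

variable {α β : Type*} {G : SimpleGraph α} {H : SimpleGraph β}

@[simp]
lemma corona_adj_inl_inl {a b : α} : (corona G H).Adj (inl a) (inl b) ↔ G.Adj a b := by
  simp only [corona, fromRel_adj, ne_eq, inl.injEq]
  exact ⟨fun ⟨_, h⟩ => h.elim id fun h => h.symm, fun h => ⟨h.ne, .inl h⟩⟩

@[simp]
lemma corona_adj_inl_inr {a : α} {p : α × β} : (corona G H).Adj (inl a) (inr p) ↔ a = p.1 := by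
  simp [corona]

@[simp]
lemma corona_adj_inr_inl {a : α} {p : α × β} : (corona G H).Adj (inr p) (inl a) ↔ a = p.1 := by
  simp [corona]

@[simp]
lemma corona_adj_inr_inr {p q : α × β} :
    (corona G H).Adj (inr p) (inr q) ↔ p.1 = q.1 ∧ H.Adj p.2 q.2 := by
  simp only [corona, fromRel_adj, ne_eq, inr.injEq]
  refine ⟨fun ⟨_, h⟩ => h.elim id fun h => ⟨h.1.symm, h.2.symm⟩, fun h => ⟨?_, .inl h⟩⟩
  rintro rfl
  exact h.2.ne rfl

lemma corona_connected (hG : G.Connected) : (corona G H).Connected := by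
  have : Nonempty α := hG.nonempty
  let ι : G →g corona G H := ⟨inl, corona_adj_inl_inl.2⟩
  have hroot : ∀ x, ∃ a, (corona G H).Reachable x (inl a) := by
    rintro (a | p)
    · exact ⟨a, .rfl⟩
    · exact ⟨p.1, (corona_adj_inr_inl.2 rfl).reachable⟩
  refine ⟨fun x y => ?_⟩
  obtain ⟨a, hxa⟩ := hroot x
  obtain ⟨b, hyb⟩ := hroot y
  exact hxa.trans (((hG.preconnected a b).map ι).trans hyb.symm)

lemma corona_dist_inl_inr (a : α) (p : β) : (corona G H).dist (inl a) (inr (a, p)) = 1 :=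
  dist_eq_one_iff_adj.2 (corona_adj_inl_inr.2 rfl)

lemma inl_mem_support_of_walk_inr {a : α} {p : β} {v : α ⊕ α × β} (hv : ∀ q, v ≠ inr (a, q))
    (W : (corona G H).Walk v (inr (a, p))) : inl a ∈ W.support := by
  obtain ⟨d, hd, hfst, hsnd⟩ := W.exists_boundary_dart {x | ∀ q, x ≠ inr (a, q)} hv
    (fun h => h p rfl)
  obtain ⟨⟨x, y⟩, hxy⟩ := d
  obtain ⟨q, rfl⟩ : ∃ q, y = inr (a, q) := by simpa using hsnd
  rcases x with b | r
  · obtain rfl : b = a := by simpa using hxy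
    exact W.dart_fst_mem_support_of_mem_darts hd
  · obtain ⟨c, s⟩ := r
    obtain rfl : c = a := (corona_adj_inr_inr.1 hxy).1
    exact absurd rfl (hfst s)

lemma corona_dist_inr_of_forall_ne (hG : G.Connected) {a : α} {v : α ⊕ α × β}
    (hv : ∀ q, v ≠ inr (a, q)) (p : β) :
    (corona G H).dist v (inr (a, p)) = (corona G H).dist v (inl a) + 1 := by
  classical
  have hC := corona_connected (H := H) hG
  refine le_antisymm ?_ ?_
  · calc (corona G H).dist v (inr (a, p))
        ≤ (corona G H).dist v (inl a) + (corona G H).dist (inl a) (inr (a, p)) :=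
          hC.dist_triangle
      _ = (corona G H).dist v (inl a) + 1 := by rw [corona_dist_inl_inr]
  · obtain ⟨W, hW⟩ := (hC.preconnected v (inr (a, p))).exists_walk_length_eq_dist
    have hmem := inl_mem_support_of_walk_inr hv W
    have hlt := W.length_takeUntil_lt_length hmem (by simp)
    have hle := dist_le (W.takeUntil (inl a) hmem)
    omega

lemma corona_dist_inr_inr [DecidableEq β] [DecidableRel H.Adj] (a : α) (w p : β) :
    (corona G H).dist (inr (a, w)) (inr (a, p)) =
      if w = p then 0 else if H.Adj w p then 1 else 2 := by
  split_ifs with hwp hadj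
  · rw [hwp, dist_self]
  · exact dist_eq_one_iff_adj.2 (corona_adj_inr_inr.2 ⟨rfl, hadj⟩)
  · have hwa : (corona G H).Adj (inr (a, w)) (inl a) := corona_adj_inr_inl.2 rfl
    have hap : (corona G H).Adj (inl a) (inr (a, p)) := corona_adj_inl_inr.2 rfl
    have hle2 := dist_le (hwa.toWalk.append hap.toWalk)
    have hpos := (hwa.reachable.trans hap.reachable).pos_dist_of_ne (by simpa using hwp)
    have hne1 : (corona G H).dist (inr (a, w)) (inr (a, p)) ≠ 1 :=
      fun h => hadj (corona_adj_inr_inr.1 (dist_eq_one_iff_adj.1 h)).2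
    simp only [Walk.length_append, Adj.length_toWalk] at hle2
    omega

def IsEdgeResolving (H : SimpleGraph β) (T : Set β) : Prop :=
  ∀ p q, H.Adj p q → ∃ w ∈ T, Xor (H.Adj w p) (H.Adj w q)

lemma corona_dist_inr_ne_iff {a : α} {w p q : β} (hpq : H.Adj p q) :
    (corona G H).dist (inr (a, w)) (inr (a, p)) ≠ (corona G H).dist (inr (a, w)) (inr (a, q)) ↔
      Xor (H.Adj w p) (H.Adj w q) := by
  classical
  have hqp := hpq.symm
  rw [corona_dist_inr_inr, corona_dist_inr_inr]
  split_ifs <;> simp_all [xor_iff_not_iff]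

lemma isEdgeResolving_of_isLocalMetricGenerator_corona (hG : G.Connected)
    {S : Set (α ⊕ α × β)} (hS : IsLocalMetricGenerator (corona G H) S) (a : α) :
    IsEdgeResolving H {w | inr (a, w) ∈ S} := by
  intro p q hpq
  obtain ⟨v, hvS, hv⟩ := hS (inr (a, p)) (inr (a, q)) (corona_adj_inr_inr.2 ⟨rfl, hpq⟩)
  by_cases hcopy : ∃ w, v = inr (a, w)
  · obtain ⟨w, rfl⟩ := hcopy
    exact ⟨w, hvS, (corona_dist_inr_ne_iff hpq).1 hv⟩
  · simp only [not_exists] at hcopy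
    rw [corona_dist_inr_of_forall_ne hG hcopy, corona_dist_inr_of_forall_ne hG hcopy] at hv
    exact absurd rfl hv

lemma card_mul_le_card_of_isLocalMetricGenerator_corona [Fintype α] (hG : G.Connected) {m : ℕ}
    (hm : ∀ T : Finset β, IsEdgeResolving H ↑T → m ≤ #T) {S : Finset (α ⊕ α × β)}
    (hS : IsLocalMetricGenerator (corona G H) ↑S) : Fintype.card α * m ≤ #S := by
  classical
  have hfiber (a : α) : m ≤ #{x ∈ S.toRight | x.1 = a} := by
    refine (hm ({x ∈ S.toRight | x.1 = a}.image Prod.snd) ?_).trans Finset.card_image_le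
    convert isEdgeResolving_of_isLocalMetricGenerator_corona hG hS a using 1
    ext w
    simp
  calc Fintype.card α * m = ∑ _a : α, m := by simp
    _ ≤ ∑ a, #{x ∈ S.toRight | x.1 = a} := Finset.sum_le_sum fun a _ => hfiber a
    _ = #S.toRight := (Finset.card_eq_sum_card_fiberwise fun x _ => Finset.mem_univ x.1).symm
    _ ≤ #S := Finset.card_toRight_le

lemma isLocalMetricGenerator_corona [Fintype α] [Nontrivial α] (hG : G.Connected) {T : Finset β}
    (hT : T.Nonempty) (hres : IsEdgeResolving H ↑T) :
    IsLocalMetricGenerator (corona G H) ↑((Finset.univ ×ˢ T).map .inr : Finset (α ⊕ α × β)) := by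
  set S : Finset (α ⊕ α × β) := (Finset.univ ×ˢ T).map .inr
  obtain ⟨w, hw⟩ := hT
  have hmem (a : α) : inr (a, w) ∈ S := by simp [S, hw]
  have hroot (a : α) (q : β) : ∃ v ∈ S,
      (corona G H).dist v (inl a) ≠ (corona G H).dist v (inr (a, q)) := by
    obtain ⟨c, hc⟩ := exists_ne a
    refine ⟨inr (c, w), hmem c, ?_⟩
    rw [corona_dist_inr_of_forall_ne hG (by simp [hc]) q]
    omega
  rintro (a | ⟨a, p⟩) (b | ⟨b, q⟩) hxy
  · refine ⟨inr (a, w), hmem a, fun h => ?_⟩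
    rw [dist_comm, corona_dist_inl_inr, eq_comm, dist_eq_one_iff_adj, corona_adj_inr_inl] at h
    exact (corona_adj_inl_inl.1 hxy).ne h.symm
  · obtain rfl : a = b := corona_adj_inl_inr.1 hxy
    exact hroot a q
  · obtain rfl : b = a := corona_adj_inr_inl.1 hxy
    obtain ⟨v, hv, h⟩ := hroot b p
    exact ⟨v, hv, h.symm⟩
  · obtain ⟨rfl, hpq⟩ := corona_adj_inr_inr.1 hxy
    obtain ⟨u, hu, hxor⟩ := hres p q hpq
    exact ⟨inr (a, u), by simpa [S] using hu, (corona_dist_inr_ne_iff hpq).2 hxor⟩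

end Corona

section PathGraph

variable {t : ℕ}

lemma xor_pathGraph_adj_iff {w p q : Fin t} (hpq : p.val + 1 = q.val) :
    Xor ((pathGraph t).Adj w p) ((pathGraph t).Adj w q) ↔
      p.val ≤ w.val + 1 ∧ w.val ≤ p.val + 2 := by
  simp only [xor_iff_not_iff, pathGraph_adj]
  omega

lemma isEdgeResolving_pathGraph_iff {T : Set (Fin t)} :
    IsEdgeResolving (pathGraph t) T ↔
      ∀ e, e + 1 < t → ∃ w ∈ T, e ≤ w.val + 1 ∧ w.val ≤ e + 2 := by
  constructor
  · intro hT e he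
    obtain ⟨w, hw, hxor⟩ := hT ⟨e, by omega⟩ ⟨e + 1, he⟩ (pathGraph_adj.2 (.inl rfl))
    exact ⟨w, hw, (xor_pathGraph_adj_iff rfl).1 hxor⟩
  · intro hT p q hpq
    rcases pathGraph_adj.1 hpq with h | h
    · obtain ⟨w, hw, hwin⟩ := hT p (h ▸ q.isLt)
      exact ⟨w, hw, (xor_pathGraph_adj_iff h).2 hwin⟩
    · obtain ⟨w, hw, hwin⟩ := hT q (h ▸ p.isLt)
      exact ⟨w, hw, ((xor_pathGraph_adj_iff h).2 hwin).symm⟩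

lemma le_card_of_isEdgeResolving_pathGraph {T : Finset (Fin t)}
    (hT : IsEdgeResolving (pathGraph t) ↑T) : (t + 2) / 4 ≤ #T := by
  classical
  have hcover : Finset.range (t - 1) ⊆ T.biUnion fun w => Finset.Icc (w.val - 2) (w.val + 1) := by
    intro e he
    obtain ⟨w, hw, hwin⟩ := isEdgeResolving_pathGraph_iff.1 hT e (by simp at he; omega)
    exact Finset.mem_biUnion.2 ⟨w, hw, Finset.mem_Icc.2 (by omega)⟩
  have hcard := (Finset.card_le_card hcover).trans
    (Finset.card_biUnion_le_card_mul _ _ 4 fun w _ => by simp only [Nat.card_Icc]; omega)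
  rw [Finset.card_range] at hcard
  omega

lemma exists_isEdgeResolving_pathGraph (ht : 2 ≤ t) :
    ∃ T : Finset (Fin t), T.Nonempty ∧ #T ≤ (t + 2) / 4 ∧ IsEdgeResolving (pathGraph t) ↑T := by
  let g (j : ℕ) : Fin t := ⟨min (4 * j + 2) (t - 1), by omega⟩
  refine ⟨(Finset.range ((t + 2) / 4)).image g, ?_, ?_, ?_⟩
  · simp only [Finset.image_nonempty, Finset.nonempty_range_iff]
    omega
  · exact Finset.card_image_le.trans (Finset.card_range _).le
  · refine isEdgeResolving_pathGraph_iff.2 fun e he => ⟨g (e / 4), ?_, ?_⟩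
    · exact Finset.mem_coe.2 (Finset.mem_image_of_mem g (Finset.mem_range.2 (by omega)))
    · simp only [g]
      omega

end PathGraph

theorem localMetricDim_corona_pathGraph {α : Type*} [Fintype α] [Nontrivial α]
    {G : SimpleGraph α} (hG : G.Connected) {t : ℕ} (ht : 2 ≤ t) :
    localMetricDim (corona G (pathGraph t)) = Fintype.card α * ((t + 2) / 4) := by
  obtain ⟨T, hTne, hTcard, hT⟩ := exists_isEdgeResolving_pathGraph ht
  refine le_antisymm ?_ (le_localMetricDim fun S hS =>
    card_mul_le_card_of_isLocalMetricGenerator_corona hG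
      (fun _ => le_card_of_isEdgeResolving_pathGraph) hS)
  calc localMetricDim (corona G (pathGraph t))
      ≤ #((Finset.univ ×ˢ T).map .inr) :=
        localMetricDim_le_card (isLocalMetricGenerator_corona hG hTne hT)
    _ = Fintype.card α * #T := by simp
    _ ≤ Fintype.card α * ((t + 2) / 4) := Nat.mul_le_mul_left _ hTcard

/-- For connected `G` of order `n ≥ 2` and `t ≥ 4`:
if `t ≡ 1 (mod 4)` then `dim_l (G ⊙ P_t) = n ⌊t/4⌋`, otherwise `dim_l (G ⊙ P_t) = n ⌈t/4⌉`. -/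
theorem stmt8 {α : Type*} [Fintype α] (G : SimpleGraph α) (hG : G.Connected)
    (hn : 2 ≤ Fintype.card α) (t : ℕ) (ht : 4 ≤ t) :
    (t % 4 = 1 →
      localMetricDim (corona G (SimpleGraph.pathGraph t)) = Fintype.card α * (t / 4)) ∧
    (t % 4 ≠ 1 →
      localMetricDim (corona G (SimpleGraph.pathGraph t)) = Fintype.card α * ((t + 3) / 4)) := by
  have : Nontrivial α := Fintype.one_lt_card_iff_nontrivial.1 hn
  rw [localMetricDim_corona_pathGraph hG (by omega)]
  exact ⟨fun h => by congr 1; omega, fun h => by congr 1; omega⟩
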